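/- arXiv:1801.02357 — 3 statements merged into one kernel-verified Lean document; each statement's English description precedes it below -/
import Mathlib

section
/- The second-variation form of the fundamental Scherk surface evaluated at the test function φ¹(u,v) = (uv)² + 2 is negative: Q(φ¹) < 0. -/
/-!
In the coordinates `(u, v)` the Scherk parametrization is conformal: off the circle
`u² + v² = 1` one has `g₁₁ = g₂₂ = λ`, `g₁₂ = 0`, the unit normal is the inverse stereographic
projection `(-2u, -2v, u² + v² - 1) / (1 + u² + v²)`, and `κ λ = -4 / (1 + u² + v²)²`.
Hence the integrand of `Q φ` is almost everywhere `|∇φ|² - 8 φ² / (1 + u² + v²)²`, where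
`4 / (1 + u² + v²)²` is the area density of the unit sphere pulled back by the Gauss map.
For `φ = (uv)² + 2` on the square, `|∇φ|² = 4u²v²(u² + v²) ≤ 8u²v²` and
`φ / (1 + u² + v²) ≥ 2/3`, so `Q φ ≤ ∫ (8u²v² - 32/9) = 32/9 - 128/9 < 0`.
The `v`-derivatives of `σ` are obtained from its `u`-derivatives through the symmetry
`σ(v, u) = R σ(u, v)`, `R(a, b, c) = (-b, -a, -c)`.
-/

noncomputable section
open MeasureTheory Real

/-- Dot product on `ℝ³ = ℝ × ℝ × ℝ`. -/
def dot3 (a b : ℝ × ℝ × ℝ) : ℝ := a.1 * b.1 + a.2.1 * b.2.1 + a.2.2 * b.2.2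

/-- Cross product on `ℝ³ = ℝ × ℝ × ℝ`. -/
def cross3 (a b : ℝ × ℝ × ℝ) : ℝ × ℝ × ℝ :=
  (a.2.1 * b.2.2 - a.2.2 * b.2.1, a.2.2 * b.1 - a.1 * b.2.2, a.1 * b.2.1 - a.2.1 * b.1)

/-- Euclidean norm on `ℝ³ = ℝ × ℝ × ℝ`. -/
def norm3 (a : ℝ × ℝ × ℝ) : ℝ := Real.sqrt (dot3 a a)

/-- Partial derivative in the first (`u`) variable. -/
def pdU {E : Type*} [NormedAddCommGroup E] [NormedSpace ℝ E] (f : ℝ × ℝ → E) (p : ℝ × ℝ) : E :=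
  deriv (fun x => f (x, p.2)) p.1

/-- Partial derivative in the second (`v`) variable. -/
def pdV {E : Type*} [NormedAddCommGroup E] [NormedSpace ℝ E] (f : ℝ × ℝ → E) (p : ℝ × ℝ) : E :=
  deriv (fun y => f (p.1, y)) p.2

/-- The fundamental domain `Ω₀ = (-1,1) × (-1,1)`. -/
def Ω₀ : Set (ℝ × ℝ) := Set.Ioo (-1 : ℝ) 1 ×ˢ Set.Ioo (-1 : ℝ) 1

/-- The fundamental Scherk parametrization. -/
def scherk (p : ℝ × ℝ) : ℝ × ℝ × ℝ :=
  (arctan (2 * p.1 / (p.1 ^ 2 + p.2 ^ 2 - 1)),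
   arctan (-2 * p.2 / (p.1 ^ 2 + p.2 ^ 2 - 1)),
   (1 / 2) * Real.log (((p.1 ^ 2 - p.2 ^ 2 + 1) ^ 2 + 4 * p.1 ^ 2 * p.2 ^ 2) /
     ((p.1 ^ 2 - p.2 ^ 2 - 1) ^ 2 + 4 * p.1 ^ 2 * p.2 ^ 2)))

def σu : ℝ × ℝ → ℝ × ℝ × ℝ := pdU scherk
def σv : ℝ × ℝ → ℝ × ℝ × ℝ := pdV scherk
def σuu : ℝ × ℝ → ℝ × ℝ × ℝ := pdU σu
def σuv : ℝ × ℝ → ℝ × ℝ × ℝ := pdV σu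
def σvv : ℝ × ℝ → ℝ × ℝ × ℝ := pdV σv

/-- First fundamental form. -/
def g11 (p : ℝ × ℝ) : ℝ := dot3 (σu p) (σu p)
def g12 (p : ℝ × ℝ) : ℝ := dot3 (σu p) (σv p)
def g22 (p : ℝ × ℝ) : ℝ := dot3 (σv p) (σv p)

def detg (p : ℝ × ℝ) : ℝ := g11 p * g22 p - g12 p ^ 2

/-- Components of the inverse metric `(gⁱʲ)`. -/
def ginv11 (p : ℝ × ℝ) : ℝ := g22 p / detg p
def ginv12 (p : ℝ × ℝ) : ℝ := -g12 p / detg p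
def ginv22 (p : ℝ × ℝ) : ℝ := g11 p / detg p

/-- Unit normal `N = (σ_u × σ_v)/‖σ_u × σ_v‖`. -/
def NS (p : ℝ × ℝ) : ℝ × ℝ × ℝ :=
  (norm3 (cross3 (σu p) (σv p)))⁻¹ • cross3 (σu p) (σv p)

/-- Second fundamental form. -/
def h11 (p : ℝ × ℝ) : ℝ := dot3 (σuu p) (NS p)
def h12 (p : ℝ × ℝ) : ℝ := dot3 (σuv p) (NS p)
def h22 (p : ℝ × ℝ) : ℝ := dot3 (σvv p) (NS p)

/-- Gaussian curvature. -/
def κ (p : ℝ × ℝ) : ℝ := (h11 p * h22 p - h12 p ^ 2) / detg p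

/-- The second-variation quadratic form of the fundamental Scherk surface. -/
def Q (φ : ℝ × ℝ → ℝ) : ℝ :=
  ∫ p in Ω₀,
    (ginv11 p * pdU φ p ^ 2 + 2 * ginv12 p * pdU φ p * pdV φ p + ginv22 p * pdV φ p ^ 2
      + 2 * κ p * φ p ^ 2) * Real.sqrt (detg p)

/-- The polarized second-variation bilinear form. -/
def B (φ ψ : ℝ × ℝ → ℝ) : ℝ :=
  ∫ p in Ω₀,
    (ginv11 p * pdU φ p * pdU ψ p + ginv12 p * pdU φ p * pdV ψ p
      + ginv12 p * pdV φ p * pdU ψ p + ginv22 p * pdV φ p * pdV ψ p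
      + 2 * κ p * φ p * ψ p) * Real.sqrt (detg p)

/-- The test functions `φ¹, φ², φ³`. -/
def Φ : Fin 3 → (ℝ × ℝ → ℝ) :=
  ![fun p => (p.1 * p.2) ^ 2 + 2,
    fun p => p.1 - p.1 ^ 5 / 4,
    fun p => p.2 - p.2 ^ 5 / 4]

theorem HasDerivAt.arctan_div {f g : ℝ → ℝ} {f' g' x : ℝ} (hf : HasDerivAt f f' x)
    (hg : HasDerivAt g g' x) (hx : g x ≠ 0) :
    HasDerivAt (fun t => Real.arctan (f t / g t))
      ((f' * g x - f x * g') / (f x ^ 2 + g x ^ 2)) x := by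
  convert (hf.fun_div hg hx).arctan using 1
  field_simp
  ring

theorem HasDerivAt.log_div {f g : ℝ → ℝ} {f' g' x : ℝ} (hf : HasDerivAt f f' x)
    (hg : HasDerivAt g g' x) (hfx : f x ≠ 0) (hgx : g x ≠ 0) :
    HasDerivAt (fun t => Real.log (f t / g t)) (f' / f x - g' / g x) x := by
  convert (hf.fun_div hg hgx).log (div_ne_zero hfx hgx) using 1
  field_simp

def reflect3 (a : ℝ × ℝ × ℝ) : ℝ × ℝ × ℝ := (-a.2.1, -a.1, -a.2.2)

theorem HasDerivAt.reflect3 {f : ℝ → ℝ × ℝ × ℝ} {f' : ℝ × ℝ × ℝ} {x : ℝ}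
    (hf : HasDerivAt f f' x) : HasDerivAt (fun t => reflect3 (f t)) (reflect3 f') x := by
  have h₁ := hasFDerivAt_fst.comp_hasDerivAt x hf
  have h₂ := hasFDerivAt_snd.comp_hasDerivAt x hf
  have h₂₁ := hasFDerivAt_fst.comp_hasDerivAt x h₂
  have h₂₂ := hasFDerivAt_snd.comp_hasDerivAt x h₂
  exact h₂₁.neg.prodMk (h₁.neg.prodMk h₂₂.neg)

theorem norm3_smul (c : ℝ) (a : ℝ × ℝ × ℝ) : norm3 (c • a) = |c| * norm3 a := by
  rw [norm3, norm3, ← Real.sqrt_sq_eq_abs, ← Real.sqrt_mul (sq_nonneg c)]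
  congr 1
  simp only [dot3, Prod.smul_fst, Prod.smul_snd, smul_eq_mul]
  ring

theorem volume_setOf_sq_add_sq_eq (r : ℝ) :
    volume {p : ℝ × ℝ | p.1 ^ 2 + p.2 ^ 2 = r} = 0 := by
  have hmeas : MeasurableSet {p : ℝ × ℝ | p.1 ^ 2 + p.2 ^ 2 = r} :=
    measurableSet_eq_fun (by fun_prop) measurable_const
  rw [Measure.volume_eq_prod, Measure.measure_prod_null hmeas]
  refine Filter.Eventually.of_forall fun x => measure_mono_null (t := {√(r - x ^ 2), -√(r - x ^ 2)})
    (fun y hy => ?_) ((Set.toFinite _).measure_zero _)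
  have hy : |y| = √(r - x ^ 2) := by
    rw [← Real.sqrt_sq_eq_abs, ← show x ^ 2 + y ^ 2 = r from hy, add_sub_cancel_left]
  exact (abs_eq (Real.sqrt_nonneg _)).1 hy

theorem integrableOn_Ω₀_of_continuous {f : ℝ × ℝ → ℝ} (hf : Continuous f) :
    IntegrableOn f Ω₀ :=
  (hf.continuousOn.integrableOn_compact (isCompact_Icc.prod isCompact_Icc)).mono_set
    (Set.prod_mono Set.Ioo_subset_Icc_self Set.Ioo_subset_Icc_self)

theorem volume_Ω₀ : volume Ω₀ = 4 := by
  rw [Ω₀, Measure.volume_eq_prod, Measure.prod_prod, Real.volume_Ioo, ← ENNReal.ofReal_mul] <;>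
    norm_num

theorem setIntegral_Ω₀_mul (f g : ℝ → ℝ) :
    ∫ p in Ω₀, f p.1 * g p.2 = (∫ x in Set.Ioo (-1) 1, f x) * ∫ y in Set.Ioo (-1) 1, g y := by
  rw [Measure.volume_eq_prod]
  exact setIntegral_prod_mul f g _ _

theorem secondVariation_integrand_of_conformal {p : ℝ × ℝ} {c : ℝ} (hc : 0 < c)
    (h₁₁ : g11 p = c) (h₂₂ : g22 p = c) (h₁₂ : g12 p = 0) (a b φ : ℝ) :
    (ginv11 p * a ^ 2 + 2 * ginv12 p * a * b + ginv22 p * b ^ 2 + 2 * κ p * φ ^ 2) *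
      √(detg p) = a ^ 2 + b ^ 2 + 2 * (κ p * c) * φ ^ 2 := by
  have hdet : detg p = c ^ 2 := by rw [detg, h₁₁, h₂₂, h₁₂]; ring
  rw [ginv11, ginv12, ginv22, hdet, h₁₁, h₂₂, h₁₂, Real.sqrt_sq hc.le]
  field_simp
  ring

namespace Scherk

open Filter Topology

variable {u v : ℝ}

def D (u v : ℝ) : ℝ := u ^ 2 + v ^ 2 - 1
def S (u v : ℝ) : ℝ := u ^ 2 + v ^ 2 + 1
-- `A u v` and `A v u` are the numerator and denominator of the logarithm in `scherk`.
def A (u v : ℝ) : ℝ := D u v ^ 2 + 4 * u ^ 2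

theorem D_comm (u v : ℝ) : D v u = D u v := by unfold D; ring

theorem S_comm (u v : ℝ) : S v u = S u v := by unfold S; ring

theorem S_pos (u v : ℝ) : 0 < S u v := by unfold S; positivity

theorem sq_D_add_pos (hD : D u v ≠ 0) (c : ℝ) : 0 < D u v ^ 2 + 4 * c ^ 2 := by positivity

theorem A_pos (hD : D u v ≠ 0) : 0 < A u v := sq_D_add_pos hD u

theorem A_swap_pos (hD : D u v ≠ 0) : 0 < A v u := by
  rw [A, D_comm]
  exact sq_D_add_pos hD v

theorem eventually_D_ne_fst (hD : D u v ≠ 0) : ∀ᶠ x in 𝓝 u, D x v ≠ 0 :=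
  (show Continuous fun x => D x v by unfold D; fun_prop).continuousAt.eventually_ne hD

theorem eventually_D_ne_snd (hD : D u v ≠ 0) : ∀ᶠ y in 𝓝 v, D u y ≠ 0 :=
  (show Continuous fun y => D u y by unfold D; fun_prop).continuousAt.eventually_ne hD

theorem ae_D_ne : ∀ᵐ p : ℝ × ℝ, D p.1 p.2 ≠ 0 :=
  ae_iff.2 (by simpa [D, sub_eq_zero] using volume_setOf_sq_add_sq_eq 1)

theorem hasDerivAt_D_fst (u v : ℝ) : HasDerivAt (fun x => D x v) (2 * u) u := by
  unfold D; simpa using ((hasDerivAt_pow 2 u).add_const (v ^ 2)).sub_const 1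

theorem hasDerivAt_D_snd (u v : ℝ) : HasDerivAt (fun y => D u y) (2 * v) v := by
  unfold D; simpa using ((hasDerivAt_pow 2 v).const_add (u ^ 2)).sub_const 1

theorem hasDerivAt_S_fst (u v : ℝ) : HasDerivAt (fun x => S x v) (2 * u) u := by
  unfold S; simpa using ((hasDerivAt_pow 2 u).add_const (v ^ 2)).add_const 1

theorem hasDerivAt_S_snd (u v : ℝ) : HasDerivAt (fun y => S u y) (2 * v) v := by
  unfold S; simpa using ((hasDerivAt_pow 2 v).const_add (u ^ 2)).add_const 1

theorem hasDerivAt_A_fst (u v : ℝ) : HasDerivAt (fun x => A x v) (4 * u * S u v) u := by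
  refine (((hasDerivAt_D_fst u v).fun_pow 2).fun_add
    ((hasDerivAt_pow 2 u).const_mul 4)).congr_deriv ?_
  unfold D S; ring

theorem hasDerivAt_A_snd (u v : ℝ) : HasDerivAt (fun y => A u y) (4 * v * D u v) v :=
  (((hasDerivAt_D_snd u v).fun_pow 2).add_const _).congr_deriv (by ring)

theorem hasDerivAt_A_swap_fst (u v : ℝ) : HasDerivAt (fun x => A v x) (4 * u * D u v) u :=
  D_comm u v ▸ hasDerivAt_A_snd v u

theorem hasDerivAt_A_swap_snd (u v : ℝ) : HasDerivAt (fun y => A y u) (4 * v * S u v) v :=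
  S_comm u v ▸ hasDerivAt_A_fst v u

theorem scherk_swap (u v : ℝ) : scherk (v, u) = reflect3 (scherk (u, v)) := by
  have hN : (v ^ 2 - u ^ 2 + 1) ^ 2 + 4 * v ^ 2 * u ^ 2 =
      (u ^ 2 - v ^ 2 - 1) ^ 2 + 4 * u ^ 2 * v ^ 2 := by ring
  have hM : (v ^ 2 - u ^ 2 - 1) ^ 2 + 4 * v ^ 2 * u ^ 2 =
      (u ^ 2 - v ^ 2 + 1) ^ 2 + 4 * u ^ 2 * v ^ 2 := by ring
  simp only [scherk, reflect3, hN, hM, add_comm (v ^ 2) (u ^ 2)]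
  refine Prod.ext ?_ (Prod.ext ?_ ?_) <;> dsimp only
  · rw [neg_mul, neg_div, arctan_neg, neg_neg]
  · rw [neg_mul, neg_div, arctan_neg]
  · rw [← inv_div ((u ^ 2 - v ^ 2 + 1) ^ 2 + 4 * u ^ 2 * v ^ 2), log_inv]
    ring

def tangent (u v : ℝ) : ℝ × ℝ × ℝ :=
  (2 * (v ^ 2 - u ^ 2 - 1) / A u v, 4 * u * v / A v u,
    2 * u * S u v / A u v - 2 * u * D u v / A v u)

theorem hasDerivAt_scherk_fst (hD : D u v ≠ 0) :
    HasDerivAt (fun x => scherk (x, v)) (tangent u v) u := by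
  have hN : ∀ x, (x ^ 2 - v ^ 2 + 1) ^ 2 + 4 * x ^ 2 * v ^ 2 = A x v := fun x => by
    unfold A D; ring
  have hM : ∀ x, (x ^ 2 - v ^ 2 - 1) ^ 2 + 4 * x ^ 2 * v ^ 2 = A v x := fun x => by
    unfold A D; ring
  have h₁ : HasDerivAt (fun x => arctan (2 * x / D x v)) (2 * (v ^ 2 - u ^ 2 - 1) / A u v) u := by
    refine (((hasDerivAt_id' u).const_mul 2).arctan_div (hasDerivAt_D_fst u v) hD).congr_deriv ?_
    rw [show (2 * u) ^ 2 + D u v ^ 2 = A u v by unfold A; ring]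
    unfold D; ring
  have h₂ : HasDerivAt (fun x => arctan (-2 * v / D x v)) (4 * u * v / A v u) u := by
    refine ((hasDerivAt_const u (-2 * v)).arctan_div (hasDerivAt_D_fst u v) hD).congr_deriv ?_
    rw [show (-2 * v) ^ 2 + D u v ^ 2 = A v u by unfold A; rw [D_comm]; ring]
    ring
  have h₃ : HasDerivAt (fun x => 1 / 2 * log (A x v / A v x))
      (2 * u * S u v / A u v - 2 * u * D u v / A v u) u :=
    (((hasDerivAt_A_fst u v).log_div (hasDerivAt_A_swap_fst u v) (A_pos hD).ne'
      (A_swap_pos hD).ne').const_mul _).congr_deriv (by ring)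
  simp only [scherk, hN, hM]
  exact h₁.prodMk (h₂.prodMk h₃)

theorem hasDerivAt_scherk_snd (hD : D u v ≠ 0) :
    HasDerivAt (fun y => scherk (u, y)) (reflect3 (tangent v u)) v := by
  rw [show (fun y => scherk (u, y)) = fun y => reflect3 (scherk (y, u)) from
    funext fun y => scherk_swap y u]
  exact (hasDerivAt_scherk_fst (D_comm u v ▸ hD)).reflect3

theorem σu_eq (hD : D u v ≠ 0) : σu (u, v) = tangent u v :=
  (hasDerivAt_scherk_fst hD).deriv

theorem σv_eq (hD : D u v ≠ 0) : σv (u, v) = reflect3 (tangent v u) :=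
  (hasDerivAt_scherk_snd hD).deriv

-- The quotient rule applied componentwise to `tangent`, left unsimplified.
def tangentDerivFst (u v : ℝ) : ℝ × ℝ × ℝ :=
  ((-(4 * u) * A u v - 2 * (v ^ 2 - u ^ 2 - 1) * (4 * u * S u v)) / A u v ^ 2,
    (4 * v * A v u - 4 * u * v * (4 * u * D u v)) / A v u ^ 2,
    ((2 * S u v + 4 * u ^ 2) * A u v - 2 * u * S u v * (4 * u * S u v)) / A u v ^ 2
      - ((2 * D u v + 4 * u ^ 2) * A v u - 2 * u * D u v * (4 * u * D u v)) / A v u ^ 2)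

def tangentDerivSnd (u v : ℝ) : ℝ × ℝ × ℝ :=
  ((4 * v * A u v - 2 * (v ^ 2 - u ^ 2 - 1) * (4 * v * D u v)) / A u v ^ 2,
    (4 * u * A v u - 4 * u * v * (4 * v * S u v)) / A v u ^ 2,
    (4 * u * v * A u v - 2 * u * S u v * (4 * v * D u v)) / A u v ^ 2
      - (4 * u * v * A v u - 2 * u * D u v * (4 * v * S u v)) / A v u ^ 2)

theorem hasDerivAt_tangent_fst (hD : D u v ≠ 0) :
    HasDerivAt (fun x => tangent x v) (tangentDerivFst u v) u := by
  have hsq : HasDerivAt (fun x : ℝ => x ^ 2) (2 * u) u := by simpa using hasDerivAt_pow 2 u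
  have hx2 : HasDerivAt (fun x : ℝ => 2 * x) 2 u := by simpa using (hasDerivAt_id' u).const_mul 2
  have h₁ : HasDerivAt (fun x => 2 * (v ^ 2 - x ^ 2 - 1)) (-(4 * u)) u :=
    (((hsq.const_sub _).sub_const 1).const_mul 2).congr_deriv (by ring)
  have h₂ : HasDerivAt (fun x => 4 * x * v) (4 * v) u :=
    (((hasDerivAt_id' u).const_mul 4).mul_const v).congr_deriv (by ring)
  have h₃ : HasDerivAt (fun x => 2 * x * S x v) (2 * S u v + 4 * u ^ 2) u :=
    (hx2.fun_mul (hasDerivAt_S_fst u v)).congr_deriv (by ring)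
  have h₄ : HasDerivAt (fun x => 2 * x * D x v) (2 * D u v + 4 * u ^ 2) u :=
    (hx2.fun_mul (hasDerivAt_D_fst u v)).congr_deriv (by ring)
  have hA := hasDerivAt_A_fst u v
  have hB := hasDerivAt_A_swap_fst u v
  have hA0 := (A_pos hD).ne'
  have hB0 := (A_swap_pos hD).ne'
  exact (h₁.fun_div hA hA0).prodMk ((h₂.fun_div hB hB0).prodMk
    ((h₃.fun_div hA hA0).fun_sub (h₄.fun_div hB hB0)))

theorem hasDerivAt_tangent_snd (hD : D u v ≠ 0) :
    HasDerivAt (fun y => tangent u y) (tangentDerivSnd u v) v := by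
  have hsq : HasDerivAt (fun y : ℝ => y ^ 2) (2 * v) v := by simpa using hasDerivAt_pow 2 v
  have h₁ : HasDerivAt (fun y => 2 * (y ^ 2 - u ^ 2 - 1)) (4 * v) v :=
    (((hsq.sub_const _).sub_const 1).const_mul 2).congr_deriv (by ring)
  have h₂ : HasDerivAt (fun y => 4 * u * y) (4 * u) v :=
    ((hasDerivAt_id' v).const_mul (4 * u)).congr_deriv (by ring)
  have h₃ : HasDerivAt (fun y => 2 * u * S u y) (4 * u * v) v :=
    ((hasDerivAt_S_snd u v).const_mul (2 * u)).congr_deriv (by ring)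
  have h₄ : HasDerivAt (fun y => 2 * u * D u y) (4 * u * v) v :=
    ((hasDerivAt_D_snd u v).const_mul (2 * u)).congr_deriv (by ring)
  have hA := hasDerivAt_A_snd u v
  have hB := hasDerivAt_A_swap_snd u v
  have hA0 := (A_pos hD).ne'
  have hB0 := (A_swap_pos hD).ne'
  exact (h₁.fun_div hA hA0).prodMk ((h₂.fun_div hB hB0).prodMk
    ((h₃.fun_div hA hA0).fun_sub (h₄.fun_div hB hB0)))

theorem σuu_eq (hD : D u v ≠ 0) : σuu (u, v) = tangentDerivFst u v :=
  ((hasDerivAt_tangent_fst hD).congr_of_eventuallyEq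
    ((eventually_D_ne_fst hD).mono fun _ hx => σu_eq hx)).deriv

theorem σuv_eq (hD : D u v ≠ 0) : σuv (u, v) = tangentDerivSnd u v :=
  ((hasDerivAt_tangent_snd hD).congr_of_eventuallyEq
    ((eventually_D_ne_snd hD).mono fun _ hy => σu_eq hy)).deriv

theorem σvv_eq (hD : D u v ≠ 0) : σvv (u, v) = reflect3 (tangentDerivFst v u) :=
  ((hasDerivAt_tangent_fst (D_comm u v ▸ hD)).reflect3.congr_of_eventuallyEq
    ((eventually_D_ne_snd hD).mono fun _ hy => σv_eq hy)).deriv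

def conformalFactor (u v : ℝ) : ℝ := 4 * S u v ^ 2 / (A u v * A v u)

def normal (u v : ℝ) : ℝ × ℝ × ℝ := (-(2 * u) / S u v, -(2 * v) / S u v, D u v / S u v)

theorem conformalFactor_pos (hD : D u v ≠ 0) : 0 < conformalFactor u v := by
  have := A_pos hD; have := A_swap_pos hD; have := S_pos u v
  unfold conformalFactor; positivity

theorem g11_eq (hD : D u v ≠ 0) : g11 (u, v) = conformalFactor u v := by
  have hA := (sq_D_add_pos hD u).ne'; have hB := (sq_D_add_pos hD v).ne'
  rw [g11, σu_eq hD]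
  simp only [dot3, tangent, conformalFactor, A, D_comm u v]
  unfold S D at *
  field_simp
  ring

theorem g22_eq (hD : D u v ≠ 0) : g22 (u, v) = conformalFactor u v := by
  have hA := (sq_D_add_pos hD u).ne'; have hB := (sq_D_add_pos hD v).ne'
  rw [g22, σv_eq hD]
  simp only [dot3, reflect3, tangent, conformalFactor, A, D_comm u v, S_comm u v]
  unfold S D at *
  field_simp
  ring

theorem g12_eq (hD : D u v ≠ 0) : g12 (u, v) = 0 := by
  have hA := (sq_D_add_pos hD u).ne'; have hB := (sq_D_add_pos hD v).ne'
  rw [g12, σu_eq hD, σv_eq hD]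
  simp only [dot3, reflect3, tangent, A, D_comm u v, S_comm u v]
  unfold S D at *
  field_simp
  ring

theorem norm3_normal (u v : ℝ) : norm3 (normal u v) = 1 := by
  have := (S_pos u v).ne'
  rw [norm3, ← Real.sqrt_one]
  congr 1
  simp only [dot3, normal]
  unfold S D at *
  field_simp
  ring

theorem cross3_tangent (hD : D u v ≠ 0) :
    cross3 (tangent u v) (reflect3 (tangent v u)) = conformalFactor u v • normal u v := by
  have hA := (sq_D_add_pos hD u).ne'; have hB := (sq_D_add_pos hD v).ne'
  have hS := (S_pos u v).ne'
  simp only [cross3, reflect3, tangent, conformalFactor, normal, A, D_comm u v, S_comm u v,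
    Prod.smul_mk, smul_eq_mul]
  unfold S D at *
  refine Prod.ext ?_ (Prod.ext ?_ ?_) <;> dsimp only <;> field_simp <;> ring

theorem NS_eq (hD : D u v ≠ 0) : NS (u, v) = normal u v := by
  have hc := conformalFactor_pos hD
  rw [NS, σu_eq hD, σv_eq hD, cross3_tangent hD, norm3_smul, norm3_normal, abs_of_pos hc,
    mul_one, smul_smul, inv_mul_cancel₀ hc.ne', one_smul]

theorem h11_eq (hD : D u v ≠ 0) :
    h11 (u, v) = 4 * (u ^ 4 - 6 * u ^ 2 * v ^ 2 + v ^ 4 - 1) / (A u v * A v u) := by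
  have hA := (sq_D_add_pos hD u).ne'; have hB := (sq_D_add_pos hD v).ne'
  have hS := (S_pos u v).ne'
  rw [h11, σuu_eq hD, NS_eq hD]
  simp only [dot3, tangentDerivFst, normal, A, D_comm u v]
  unfold S D at *
  field_simp
  ring

theorem h12_eq (hD : D u v ≠ 0) :
    h12 (u, v) = 16 * u * v * (u ^ 2 - v ^ 2) / (A u v * A v u) := by
  have hA := (sq_D_add_pos hD u).ne'; have hB := (sq_D_add_pos hD v).ne'
  have hS := (S_pos u v).ne'
  rw [h12, σuv_eq hD, NS_eq hD]
  simp only [dot3, tangentDerivSnd, normal, A, D_comm u v]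
  unfold S D at *
  field_simp
  ring

theorem h22_eq (hD : D u v ≠ 0) :
    h22 (u, v) = -(4 * (u ^ 4 - 6 * u ^ 2 * v ^ 2 + v ^ 4 - 1)) / (A u v * A v u) := by
  have hA := (sq_D_add_pos hD u).ne'; have hB := (sq_D_add_pos hD v).ne'
  have hS := (S_pos u v).ne'
  rw [h22, σvv_eq hD, NS_eq hD]
  simp only [dot3, reflect3, tangentDerivFst, normal, A, D_comm u v, S_comm u v]
  unfold S D at *
  field_simp
  ring

theorem κ_mul_conformalFactor (hD : D u v ≠ 0) :
    κ (u, v) * conformalFactor u v = -4 / S u v ^ 2 := by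
  have hA := (sq_D_add_pos hD u).ne'; have hB := (sq_D_add_pos hD v).ne'
  have hS := (S_pos u v).ne'
  rw [κ, detg, g11_eq hD, g22_eq hD, g12_eq hD, h11_eq hD, h12_eq hD, h22_eq hD]
  simp only [conformalFactor, A, D_comm u v]
  unfold S D at *
  field_simp
  ring

theorem Q_eq (φ : ℝ × ℝ → ℝ) :
    Q φ = ∫ p in Ω₀, (pdU φ p ^ 2 + pdV φ p ^ 2 - 8 * φ p ^ 2 / S p.1 p.2 ^ 2) := by
  refine setIntegral_congr_ae (measurableSet_Ioo.prod measurableSet_Ioo) ?_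
  filter_upwards [ae_D_ne] with ⟨u, v⟩ hD _
  rw [secondVariation_integrand_of_conformal (conformalFactor_pos hD) (g11_eq hD) (g22_eq hD)
    (g12_eq hD), κ_mul_conformalFactor hD]
  ring

theorem pdU_testFunction (p : ℝ × ℝ) :
    pdU (fun p : ℝ × ℝ => (p.1 * p.2) ^ 2 + 2) p = 2 * p.1 * p.2 ^ 2 :=
  ((((hasDerivAt_id' p.1).mul_const p.2).fun_pow 2).add_const 2).deriv.trans (by ring)

theorem pdV_testFunction (p : ℝ × ℝ) :
    pdV (fun p : ℝ × ℝ => (p.1 * p.2) ^ 2 + 2) p = 2 * p.1 ^ 2 * p.2 :=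
  ((((hasDerivAt_id' p.2).const_mul p.1).fun_pow 2).add_const 2).deriv.trans (by ring)

theorem continuous_div_S_sq {f : ℝ × ℝ → ℝ} (hf : Continuous f) :
    Continuous fun p => f p / S p.1 p.2 ^ 2 :=
  hf.div (by unfold S; fun_prop) fun p => (pow_pos (S_pos p.1 p.2) 2).ne'

theorem integrand_testFunction_le {p : ℝ × ℝ} (hp : p ∈ Ω₀) :
    (2 * p.1 * p.2 ^ 2) ^ 2 + (2 * p.1 ^ 2 * p.2) ^ 2
        - 8 * ((p.1 * p.2) ^ 2 + 2) ^ 2 / S p.1 p.2 ^ 2 ≤ 8 * p.1 ^ 2 * p.2 ^ 2 - 32 / 9 := by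
  obtain ⟨⟨hu₁, hu₂⟩, hv₁, hv₂⟩ := hp
  set u := p.1; set v := p.2
  have hu : u ^ 2 ≤ 1 := by nlinarith
  have hv : v ^ 2 ≤ 1 := by nlinarith
  have hgrad : (2 * u * v ^ 2) ^ 2 + (2 * u ^ 2 * v) ^ 2 ≤ 8 * u ^ 2 * v ^ 2 := by
    nlinarith [mul_nonneg (sq_nonneg u) (sq_nonneg v)]
  have hpot : 32 / 9 ≤ 8 * ((u * v) ^ 2 + 2) ^ 2 / S u v ^ 2 := by
    rw [le_div_iff₀ (pow_pos (S_pos u v) 2), S]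
    nlinarith [sq_nonneg (u * v), mul_nonneg (sq_nonneg u) (sq_nonneg v)]
  linarith

theorem integral_comparison_eq : ∫ p in Ω₀, (8 * p.1 ^ 2 * p.2 ^ 2 - 32 / 9 : ℝ) = -32 / 3 := by
  have hsq : ∫ x in Set.Ioo (-1 : ℝ) 1, x ^ 2 = 2 / 3 := by
    rw [integral_Ioc_eq_integral_Ioo.symm, ← intervalIntegral.integral_of_le (by norm_num),
      integral_pow]
    norm_num
  have hprod : ∫ p in Ω₀, 8 * p.1 ^ 2 * p.2 ^ 2 = 32 / 9 := by
    rw [setIntegral_Ω₀_mul (fun x => 8 * x ^ 2) (fun y => y ^ 2), integral_const_mul, hsq]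
    norm_num
  rw [integral_sub (integrableOn_Ω₀_of_continuous (by fun_prop)) (integrableOn_const
    (by rw [volume_Ω₀]; simp)), hprod, setIntegral_const, measureReal_def, volume_Ω₀]
  norm_num

end Scherk

open Scherk

/-- the second variation of the fundamental Scherk surface at
`φ¹(u,v) = (uv)² + 2` is negative. -/
theorem scherk_secondVariation_phi1_neg : Q (fun p => (p.1 * p.2) ^ 2 + 2) < 0 := by
  rw [Q_eq]
  simp only [pdU_testFunction, pdV_testFunction]
  calc _ ≤ ∫ p in Ω₀, (8 * p.1 ^ 2 * p.2 ^ 2 - 32 / 9 : ℝ) :=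
        setIntegral_mono_on
          (integrableOn_Ω₀_of_continuous
            ((by fun_prop : Continuous _).sub (continuous_div_S_sq (by fun_prop))))
          (integrableOn_Ω₀_of_continuous (by fun_prop))
          (measurableSet_Ioo.prod measurableSet_Ioo) fun _ => integrand_testFunction_le
    _ < 0 := by rw [integral_comparison_eq]; norm_num
end
end

section
/- The test functions φ¹, φ², φ³ are pairwise orthogonal for the polarized second-variation form of the fundamental Scherk surface: for all k ≠ m in {1,2,3}, B(φ^k, φ^m) = ∫_{Ω₀} (Σ_{i,j=1,2} g^{ij} ∂_iφ^k ∂_jφ^m + 2κ φ^k φ^m)·√(g₁₁g₂₂ − g₁₂²) du dv = 0. -/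
noncomputable section
open MeasureTheory Real

/-!
The Scherk parametrization is equivariant under the reflections `(u, v) ↦ (a u, b v)`,
`a, b = ±1`, of `Ω₀`: it transforms by `(x, y, z) ↦ (a x, b y, z)`. Consequently the metric
coefficients and the curvature are even, except `g₁₂`, which picks up the sign `a b`; since the
sign also enters `∂ᵤ` and `∂ᵥ`, the integrand of `B(φ, ψ)` is multiplied by `s t` whenever `φ`
and `ψ` have parities `s` and `t`. Choosing the reflection so that `s t = -1`, the integrand is
odd on the reflection-invariant square `Ω₀` and its integral vanishes; no integrability is
needed, since the change of variables equates the integral with its negative even when it is the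
junk value `0`. For `φ¹` (even in both variables) against `φ²` (odd in `u`) or `φ³` (odd in `v`),
and for `φ²` against `φ³`, such a reflection exists.
-/

section PartialDerivatives

variable {E : Type*} [NormedAddCommGroup E] [NormedSpace ℝ E]

lemma deriv_comp_of_involutive (L : E →L[ℝ] E) (hL : Function.Involutive L) (g : ℝ → E)
    (x : ℝ) : deriv (fun t => L (g t)) x = L (deriv g x) := by
  let e := ContinuousLinearEquiv.equivOfInverse L L hL hL
  change fderiv ℝ (e ∘ g) x 1 = e (fderiv ℝ g x 1)
  rw [e.comp_fderiv]
  rfl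

lemma pdU_comp_mul_prod_mul (f : ℝ × ℝ → E) (a b : ℝ) (p : ℝ × ℝ) :
    pdU (fun q => f (a * q.1, b * q.2)) p = a • pdU f (a * p.1, b * p.2) :=
  deriv_comp_mul_left a (fun x => f (x, b * p.2)) p.1

lemma pdV_comp_mul_prod_mul (f : ℝ × ℝ → E) (a b : ℝ) (p : ℝ × ℝ) :
    pdV (fun q => f (a * q.1, b * q.2)) p = b • pdV f (a * p.1, b * p.2) :=
  deriv_comp_mul_left b (fun y => f (a * p.1, y)) p.2

variable {a b c : ℝ} {f : ℝ × ℝ → E} {L : E →L[ℝ] E}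

lemma pdU_reflect_of_equivariant (ha : a * a = 1) (hL : Function.Involutive L)
    (hf : ∀ q, f (a * q.1, b * q.2) = c • L (f q)) (p : ℝ × ℝ) :
    pdU f (a * p.1, b * p.2) = (a * c) • L (pdU f p) := by
  calc pdU f (a * p.1, b * p.2)
      = a • pdU (fun q => f (a * q.1, b * q.2)) p := by
        rw [pdU_comp_mul_prod_mul, smul_smul, ha, one_smul]
    _ = (a * c) • L (pdU f p) := by
        rw [funext hf]
        simp only [pdU, deriv_fun_const_smul_field, deriv_comp_of_involutive L hL, smul_smul]

lemma pdV_reflect_of_equivariant (hb : b * b = 1) (hL : Function.Involutive L)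
    (hf : ∀ q, f (a * q.1, b * q.2) = c • L (f q)) (p : ℝ × ℝ) :
    pdV f (a * p.1, b * p.2) = (b * c) • L (pdV f p) := by
  calc pdV f (a * p.1, b * p.2)
      = b • pdV (fun q => f (a * q.1, b * q.2)) p := by
        rw [pdV_comp_mul_prod_mul, smul_smul, hb, one_smul]
    _ = (b * c) • L (pdV f p) := by
        rw [funext hf]
        simp only [pdV, deriv_fun_const_smul_field, deriv_comp_of_involutive L hL, smul_smul]

lemma pdU_reflect_of_parity {s : ℝ} {φ : ℝ × ℝ → ℝ} (ha : a * a = 1)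
    (hφ : ∀ q, φ (a * q.1, b * q.2) = s * φ q) (p : ℝ × ℝ) :
    pdU φ (a * p.1, b * p.2) = a * s * pdU φ p :=
  pdU_reflect_of_equivariant (L := ContinuousLinearMap.id ℝ ℝ) ha (fun _ => rfl) hφ p

lemma pdV_reflect_of_parity {s : ℝ} {φ : ℝ × ℝ → ℝ} (hb : b * b = 1)
    (hφ : ∀ q, φ (a * q.1, b * q.2) = s * φ q) (p : ℝ × ℝ) :
    pdV φ (a * p.1, b * p.2) = b * s * pdV φ p :=
  pdV_reflect_of_equivariant (L := ContinuousLinearMap.id ℝ ℝ) hb (fun _ => rfl) hφ p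

end PartialDerivatives

lemma dot3_smul_left (c : ℝ) (x y : ℝ × ℝ × ℝ) : dot3 (c • x) y = c * dot3 x y := by
  simp only [dot3, Prod.smul_fst, Prod.smul_snd, smul_eq_mul]; ring

lemma dot3_smul_right (c : ℝ) (x y : ℝ × ℝ × ℝ) : dot3 x (c • y) = c * dot3 x y := by
  simp only [dot3, Prod.smul_fst, Prod.smul_snd, smul_eq_mul]; ring

def scaleXY (a b : ℝ) : (ℝ × ℝ × ℝ) →L[ℝ] ℝ × ℝ × ℝ :=
  (a • ContinuousLinearMap.id ℝ ℝ).prodMap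
    ((b • ContinuousLinearMap.id ℝ ℝ).prodMap (ContinuousLinearMap.id ℝ ℝ))

@[simp]
lemma scaleXY_apply (a b : ℝ) (x : ℝ × ℝ × ℝ) : scaleXY a b x = (a * x.1, b * x.2.1, x.2.2) :=
  rfl

section Reflection

variable {a b : ℝ}

lemma scaleXY_involutive (ha : a * a = 1) (hb : b * b = 1) : Function.Involutive (scaleXY a b) :=
  fun x => by simp [← mul_assoc, ha, hb]

lemma dot3_scaleXY (ha : a * a = 1) (hb : b * b = 1) (x y : ℝ × ℝ × ℝ) :
    dot3 (scaleXY a b x) (scaleXY a b y) = dot3 x y := by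
  simp only [dot3, scaleXY_apply]
  linear_combination x.1 * y.1 * ha + x.2.1 * y.2.1 * hb

lemma norm3_scaleXY (ha : a * a = 1) (hb : b * b = 1) (x : ℝ × ℝ × ℝ) :
    norm3 (scaleXY a b x) = norm3 x := by
  rw [norm3, dot3_scaleXY ha hb, norm3]

lemma cross3_smul_scaleXY (ha : a * a = 1) (hb : b * b = 1) (x y : ℝ × ℝ × ℝ) :
    cross3 (a • scaleXY a b x) (b • scaleXY a b y) = scaleXY a b (cross3 x y) := by
  simp only [cross3, scaleXY_apply, Prod.smul_mk, smul_eq_mul, Prod.mk.injEq]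
  refine ⟨?_, ?_, ?_⟩
  · linear_combination a * (x.2.1 * y.2.2 - x.2.2 * y.2.1) * hb
  · linear_combination b * (x.2.2 * y.1 - x.1 * y.2.2) * ha
  · linear_combination (x.1 * y.2.1 - x.2.1 * y.1) * (b * b * ha + hb)

lemma arctan_mul_of_mul_self_eq_one (ha : a * a = 1) (x : ℝ) : arctan (a * x) = a * arctan x := by
  rcases mul_self_eq_one_iff.1 ha with rfl | rfl <;> simp [arctan_neg]

lemma scherk_reflect (ha : a * a = 1) (hb : b * b = 1) (p : ℝ × ℝ) :
    scherk (a * p.1, b * p.2) = scaleXY a b (scherk p) := by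
  have hu : (a * p.1) ^ 2 = p.1 ^ 2 := by linear_combination p.1 ^ 2 * ha
  have hv : (b * p.2) ^ 2 = p.2 ^ 2 := by linear_combination p.2 ^ 2 * hb
  simp only [scherk, scaleXY_apply, hu, hv, ← arctan_mul_of_mul_self_eq_one ha,
    ← arctan_mul_of_mul_self_eq_one hb, Prod.mk.injEq]
  refine ⟨?_, ?_, trivial⟩ <;> ring_nf

lemma σu_reflect (ha : a * a = 1) (hb : b * b = 1) (p : ℝ × ℝ) :
    σu (a * p.1, b * p.2) = a • scaleXY a b (σu p) := by
  have h := pdU_reflect_of_equivariant ha (scaleXY_involutive ha hb)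
    (fun q => (scherk_reflect ha hb q).trans (one_smul ℝ _).symm) p
  rwa [mul_one] at h

lemma σv_reflect (ha : a * a = 1) (hb : b * b = 1) (p : ℝ × ℝ) :
    σv (a * p.1, b * p.2) = b • scaleXY a b (σv p) := by
  have h := pdV_reflect_of_equivariant hb (scaleXY_involutive ha hb)
    (fun q => (scherk_reflect ha hb q).trans (one_smul ℝ _).symm) p
  rwa [mul_one] at h

lemma σuu_reflect (ha : a * a = 1) (hb : b * b = 1) (p : ℝ × ℝ) :
    σuu (a * p.1, b * p.2) = scaleXY a b (σuu p) := by
  have h := pdU_reflect_of_equivariant ha (scaleXY_involutive ha hb) (σu_reflect ha hb) p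
  rwa [ha, one_smul] at h

lemma σuv_reflect (ha : a * a = 1) (hb : b * b = 1) (p : ℝ × ℝ) :
    σuv (a * p.1, b * p.2) = (b * a) • scaleXY a b (σuv p) :=
  pdV_reflect_of_equivariant hb (scaleXY_involutive ha hb) (σu_reflect ha hb) p

lemma σvv_reflect (ha : a * a = 1) (hb : b * b = 1) (p : ℝ × ℝ) :
    σvv (a * p.1, b * p.2) = scaleXY a b (σvv p) := by
  have h := pdV_reflect_of_equivariant hb (scaleXY_involutive ha hb) (σv_reflect ha hb) p
  rwa [hb, one_smul] at h

lemma g11_reflect (ha : a * a = 1) (hb : b * b = 1) (p : ℝ × ℝ) :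
    g11 (a * p.1, b * p.2) = g11 p := by
  rw [g11, σu_reflect ha hb, dot3_smul_left, dot3_smul_right, dot3_scaleXY ha hb, ← mul_assoc, ha,
    one_mul, g11]

lemma g12_reflect (ha : a * a = 1) (hb : b * b = 1) (p : ℝ × ℝ) :
    g12 (a * p.1, b * p.2) = a * b * g12 p := by
  rw [g12, σu_reflect ha hb, σv_reflect ha hb, dot3_smul_left, dot3_smul_right,
    dot3_scaleXY ha hb, ← mul_assoc, g12]

lemma g22_reflect (ha : a * a = 1) (hb : b * b = 1) (p : ℝ × ℝ) :
    g22 (a * p.1, b * p.2) = g22 p := by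
  rw [g22, σv_reflect ha hb, dot3_smul_left, dot3_smul_right, dot3_scaleXY ha hb, ← mul_assoc, hb,
    one_mul, g22]

lemma detg_reflect (ha : a * a = 1) (hb : b * b = 1) (p : ℝ × ℝ) :
    detg (a * p.1, b * p.2) = detg p := by
  rw [detg, g11_reflect ha hb, g12_reflect ha hb, g22_reflect ha hb, detg]
  linear_combination -(g12 p ^ 2 * (b * b * ha + hb))

lemma NS_reflect (ha : a * a = 1) (hb : b * b = 1) (p : ℝ × ℝ) :
    NS (a * p.1, b * p.2) = scaleXY a b (NS p) := by
  rw [NS, σu_reflect ha hb, σv_reflect ha hb, cross3_smul_scaleXY ha hb, norm3_scaleXY ha hb,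
    ← map_smul, NS]

lemma κ_reflect (ha : a * a = 1) (hb : b * b = 1) (p : ℝ × ℝ) :
    κ (a * p.1, b * p.2) = κ p := by
  have h11' : h11 (a * p.1, b * p.2) = h11 p := by
    rw [h11, σuu_reflect ha hb, NS_reflect ha hb, dot3_scaleXY ha hb, h11]
  have h12' : h12 (a * p.1, b * p.2) = b * a * h12 p := by
    rw [h12, σuv_reflect ha hb, NS_reflect ha hb, dot3_smul_left, dot3_scaleXY ha hb, h12]
  have h22' : h22 (a * p.1, b * p.2) = h22 p := by
    rw [h22, σvv_reflect ha hb, NS_reflect ha hb, dot3_scaleXY ha hb, h22]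
  rw [κ, h11', h12', h22', detg_reflect ha hb, κ]
  congr 1
  linear_combination -(h12 p ^ 2 * (a * a * hb + ha))

end Reflection

lemma setIntegral_eq_zero_of_odd {α E : Type*} [MeasurableSpace α] [NormedAddCommGroup E]
    [NormedSpace ℝ E] {μ : Measure α} {e : α → α} (he : MeasurePreserving e μ μ)
    (he' : MeasurableEmbedding e) {s : Set α} (hs : e ⁻¹' s = s) {f : α → E}
    (hf : ∀ x, f (e x) = -f x) : ∫ x in s, f x ∂μ = 0 := by
  have h := he.setIntegral_preimage_emb he' f s
  rw [hs, funext hf, integral_neg] at h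
  rwa [eq_comm, eq_neg_iff_add_eq_zero, ← two_smul ℝ, smul_eq_zero, or_iff_right two_ne_zero] at h

lemma measurePreserving_const_mul_of_abs_eq_one {a : ℝ} (ha : |a| = 1) :
    MeasurePreserving (a * ·) volume volume := by
  refine ⟨measurable_const_mul a, ?_⟩
  rw [Real.map_volume_mul_left (by rintro rfl; simp at ha), abs_inv, ha, inv_one,
    ENNReal.ofReal_one, one_smul]

lemma abs_eq_one_of_mul_self_eq_one {a : ℝ} (ha : a * a = 1) : |a| = 1 := by
  rcases mul_self_eq_one_iff.1 ha with rfl | rfl <;> simp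

lemma setIntegral_Ω₀_eq_zero_of_odd {a b : ℝ} (ha : a * a = 1) (hb : b * b = 1) {f : ℝ × ℝ → ℝ}
    (hf : ∀ p, f (a * p.1, b * p.2) = -f p) : ∫ p in Ω₀, f p = 0 := by
  have ha' := abs_eq_one_of_mul_self_eq_one ha
  have hb' := abs_eq_one_of_mul_self_eq_one hb
  have hpres : MeasurePreserving (fun p : ℝ × ℝ => (a * p.1, b * p.2)) volume volume := by
    rw [Measure.volume_eq_prod]
    exact (measurePreserving_const_mul_of_abs_eq_one ha').prod
      (measurePreserving_const_mul_of_abs_eq_one hb')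
  have hemb : MeasurableEmbedding (fun p : ℝ × ℝ => (a * p.1, b * p.2)) :=
    ((Homeomorph.mulLeft₀ a (left_ne_zero_of_mul_eq_one ha)).prodCongr
      (Homeomorph.mulLeft₀ b (left_ne_zero_of_mul_eq_one hb))).toMeasurableEquiv.measurableEmbedding
  refine setIntegral_eq_zero_of_odd hpres hemb ?_ hf
  ext p
  simp only [Ω₀, Set.mem_preimage, Set.mem_prod, Set.mem_Ioo, ← abs_lt, abs_mul, ha', hb', one_mul]

def secondVariationIntegrand (φ ψ : ℝ × ℝ → ℝ) (p : ℝ × ℝ) : ℝ :=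
  (ginv11 p * pdU φ p * pdU ψ p + ginv12 p * pdU φ p * pdV ψ p
    + ginv12 p * pdV φ p * pdU ψ p + ginv22 p * pdV φ p * pdV ψ p
    + 2 * κ p * φ p * ψ p) * Real.sqrt (detg p)

lemma B_eq_setIntegral_secondVariationIntegrand (φ ψ : ℝ × ℝ → ℝ) :
    B φ ψ = ∫ p in Ω₀, secondVariationIntegrand φ ψ p :=
  rfl

section Parity

variable {a b s t : ℝ} {φ ψ : ℝ × ℝ → ℝ}

lemma secondVariationIntegrand_reflect (ha : a * a = 1) (hb : b * b = 1)
    (hφ : ∀ q, φ (a * q.1, b * q.2) = s * φ q) (hψ : ∀ q, ψ (a * q.1, b * q.2) = t * ψ q)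
    (p : ℝ × ℝ) :
    secondVariationIntegrand φ ψ (a * p.1, b * p.2) = s * t * secondVariationIntegrand φ ψ p := by
  simp only [secondVariationIntegrand, ginv11, ginv12, ginv22, g11_reflect ha hb,
    g12_reflect ha hb, g22_reflect ha hb, detg_reflect ha hb, κ_reflect ha hb, hφ, hψ,
    pdU_reflect_of_parity ha hφ, pdU_reflect_of_parity ha hψ, pdV_reflect_of_parity hb hφ,
    pdV_reflect_of_parity hb hψ]
  rcases mul_self_eq_one_iff.1 ha with rfl | rfl <;>
    rcases mul_self_eq_one_iff.1 hb with rfl | rfl <;> ring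

theorem B_eq_zero_of_reflect_parity (ha : a * a = 1) (hb : b * b = 1) (hst : s * t = -1)
    (hφ : ∀ q, φ (a * q.1, b * q.2) = s * φ q) (hψ : ∀ q, ψ (a * q.1, b * q.2) = t * ψ q) :
    B φ ψ = 0 := by
  rw [B_eq_setIntegral_secondVariationIntegrand]
  refine setIntegral_Ω₀_eq_zero_of_odd ha hb fun p => ?_
  rw [secondVariationIntegrand_reflect ha hb hφ hψ, hst, neg_one_mul]

lemma Φ_reflect (ha : a * a = 1) (hb : b * b = 1) (k : Fin 3) (q : ℝ × ℝ) :
    Φ k (a * q.1, b * q.2) = ![1, a, b] k * Φ k q := by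
  fin_cases k <;> simp only [Φ, Fin.zero_eta, Fin.mk_one, Fin.reduceFinMk, Matrix.cons_val]
  · linear_combination (q.1 * q.2) ^ 2 * (b * b * ha + hb)
  · linear_combination -(a * (a * a + 1) * q.1 ^ 5 / 4) * ha
  · linear_combination -(b * (b * b + 1) * q.2 ^ 5 / 4) * hb

end Parity

/-- the test functions `φ¹, φ², φ³` are pairwise orthogonal for the
polarized second-variation form of the fundamental Scherk surface. -/
theorem scherk_testFunctions_orthogonal :
    ∀ k m : Fin 3, k ≠ m → B (Φ k) (Φ m) = 0 := by
  intro k m hkm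
  have orthogonal_of_reflect (a b : ℝ) (ha : a * a = 1) (hb : b * b = 1)
      (hkm : ![1, a, b] k * ![1, a, b] m = -1) : B (Φ k) (Φ m) = 0 :=
    B_eq_zero_of_reflect_parity ha hb hkm (Φ_reflect ha hb k) (Φ_reflect ha hb m)
  fin_cases k <;> fin_cases m <;> first
    | exact absurd rfl hkm
    | (refine orthogonal_of_reflect (-1) 1 ?_ ?_ ?_ <;> norm_num <;> done)
    | (refine orthogonal_of_reflect 1 (-1) ?_ ?_ ?_ <;> norm_num)
end
end

section
/- The fundamental Scherk surface is minimal: at every (u,v) ∈ Ω₀ with u²+v² ≠ 1 the parametrization is harmonic, σ_{uu} + σ_{vv} = 0, and its mean curvature vanishes, g₂₂h₁₁ − 2g₁₂h₁₂ + g₁₁h₂₂ = 0. -/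
noncomputable section
open MeasureTheory Real

/-!
Away from the unit circle, `σ_u` and `σ_v` are explicit rational functions whose denominators are
`|z² + 1|²` and `|z² - 1|²` (`z = u + iv`). From these formulas one reads off that `σ` is conformal
(`σ_u · σ_v = 0`, `|σ_u| = |σ_v|`) and harmonic. For a conformal parametrization the mean curvature
numerator is `g₁₁ (h₁₁ + h₂₂) = g₁₁ (σ_uu + σ_vv) · N`, so harmonicity makes it vanish.
-/

open Filter Topology

section PartialDerivatives

variable {E : Type*} [NormedAddCommGroup E] [NormedSpace ℝ E] {f g : ℝ × ℝ → E} {s : Set (ℝ × ℝ)}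
  {p : ℝ × ℝ}

theorem pdU_congr (hs : IsOpen s) (hfg : Set.EqOn f g s) (hp : p ∈ s) : pdU f p = pdU g p := by
  have hcont : ContinuousAt (fun x : ℝ => (x, p.2)) p.1 := by fun_prop
  have hmem : s ∈ 𝓝 (p.1, p.2) := hs.mem_nhds hp
  exact EventuallyEq.deriv_eq (eventually_of_mem (hcont.preimage_mem_nhds hmem) fun x hx => hfg hx)

theorem pdV_congr (hs : IsOpen s) (hfg : Set.EqOn f g s) (hp : p ∈ s) : pdV f p = pdV g p := by
  have hcont : ContinuousAt (fun y : ℝ => (p.1, y)) p.2 := by fun_prop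
  have hmem : s ∈ 𝓝 (p.1, p.2) := hs.mem_nhds hp
  exact EventuallyEq.deriv_eq (eventually_of_mem (hcont.preimage_mem_nhds hmem) fun y hy => hfg hy)

end PartialDerivatives

theorem dot3_neg_left (a b : ℝ × ℝ × ℝ) : dot3 (-a) b = -dot3 a b := by
  simp only [dot3, Prod.fst_neg, Prod.snd_neg]
  ring

theorem meanCurvature_numerator_eq_zero_of_conformal_of_harmonic {a b xuu xuv xvv n : ℝ × ℝ × ℝ}
    (hab : dot3 a b = 0) (hconf : dot3 a a = dot3 b b) (hharm : xuu + xvv = 0) :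
    dot3 b b * dot3 xuu n - 2 * dot3 a b * dot3 xuv n + dot3 a a * dot3 xvv n = 0 := by
  rw [eq_neg_of_add_eq_zero_right hharm, dot3_neg_left, hab, hconf]
  ring

/-- For `z = u + iv`, `scherkA u v = |z² + 1|²` and `scherkB u v = |z² - 1|²`. -/
def scherkA (u v : ℝ) : ℝ := (u ^ 2 + v ^ 2 - 1) ^ 2 + 4 * u ^ 2

def scherkB (u v : ℝ) : ℝ := (u ^ 2 + v ^ 2 - 1) ^ 2 + 4 * v ^ 2

theorem scherk_eq (p : ℝ × ℝ) :
    scherk p = (arctan (2 * p.1 / (p.1 ^ 2 + p.2 ^ 2 - 1)),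
      arctan (-2 * p.2 / (p.1 ^ 2 + p.2 ^ 2 - 1)),
      1 / 2 * log (scherkA p.1 p.2 / scherkB p.1 p.2)) := by
  simp only [scherk, scherkA, scherkB]
  ring_nf

def scherkU (p : ℝ × ℝ) : ℝ × ℝ × ℝ :=
  (2 * (p.2 ^ 2 - p.1 ^ 2 - 1) / scherkA p.1 p.2, 4 * p.1 * p.2 / scherkB p.1 p.2,
    2 * p.1 * (p.1 ^ 2 + p.2 ^ 2 + 1) / scherkA p.1 p.2
      - 2 * p.1 * (p.1 ^ 2 + p.2 ^ 2 - 1) / scherkB p.1 p.2)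

def scherkV (p : ℝ × ℝ) : ℝ × ℝ × ℝ :=
  (-(4 * p.1 * p.2) / scherkA p.1 p.2, 2 * (p.2 ^ 2 - p.1 ^ 2 + 1) / scherkB p.1 p.2,
    2 * p.2 * (p.1 ^ 2 + p.2 ^ 2 - 1) / scherkA p.1 p.2
      - 2 * p.2 * (p.1 ^ 2 + p.2 ^ 2 + 1) / scherkB p.1 p.2)

theorem hasDerivAt_scherkA_u (u v : ℝ) :
    HasDerivAt (fun x => scherkA x v) (4 * u * (u ^ 2 + v ^ 2 + 1)) u :=
  ((((hasDerivAt_pow 2 u).add_const (v ^ 2)).sub_const 1).fun_pow 2).add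
    ((hasDerivAt_pow 2 u).const_mul 4) |>.congr_deriv (by push_cast; ring)

theorem hasDerivAt_scherkA_v (u v : ℝ) :
    HasDerivAt (fun y => scherkA u y) (4 * v * (u ^ 2 + v ^ 2 - 1)) v :=
  ((((hasDerivAt_pow 2 v).const_add (u ^ 2)).sub_const 1).fun_pow 2).add_const (4 * u ^ 2)
    |>.congr_deriv (by push_cast; ring)

theorem hasDerivAt_scherkB_u (u v : ℝ) :
    HasDerivAt (fun x => scherkB x v) (4 * u * (u ^ 2 + v ^ 2 - 1)) u :=
  ((((hasDerivAt_pow 2 u).add_const (v ^ 2)).sub_const 1).fun_pow 2).add_const (4 * v ^ 2)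
    |>.congr_deriv (by push_cast; ring)

theorem hasDerivAt_scherkB_v (u v : ℝ) :
    HasDerivAt (fun y => scherkB u y) (4 * v * (u ^ 2 + v ^ 2 + 1)) v :=
  ((((hasDerivAt_pow 2 v).const_add (u ^ 2)).sub_const 1).fun_pow 2).add
    ((hasDerivAt_pow 2 v).const_mul 4) |>.congr_deriv (by push_cast; ring)

section

variable {u v : ℝ}

theorem scherkA_pos (h : u ^ 2 + v ^ 2 ≠ 1) : 0 < scherkA u v := by
  have : 0 < (u ^ 2 + v ^ 2 - 1) ^ 2 := by positivity [sub_ne_zero.mpr h]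
  unfold scherkA
  positivity

theorem scherkB_pos (h : u ^ 2 + v ^ 2 ≠ 1) : 0 < scherkB u v := by
  have : 0 < (u ^ 2 + v ^ 2 - 1) ^ 2 := by positivity [sub_ne_zero.mpr h]
  unfold scherkB
  positivity

theorem hasDerivAt_scherk_u (h : u ^ 2 + v ^ 2 ≠ 1) :
    HasDerivAt (fun x => scherk (x, v)) (scherkU (u, v)) u := by
  have hr : u ^ 2 + v ^ 2 - 1 ≠ 0 := sub_ne_zero.mpr h
  have hA := (scherkA_pos h).ne'
  have hB := (scherkB_pos h).ne'
  have hden : HasDerivAt (fun x => x ^ 2 + v ^ 2 - 1) (2 * u) u := by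
    simpa using ((hasDerivAt_pow 2 u).add_const (v ^ 2)).sub_const 1
  have h₁ := (((hasDerivAt_id u).const_mul 2).div hden hr).arctan
  have h₂ := ((hasDerivAt_const u (-2 * v)).div hden hr).arctan
  have h₃ := (((hasDerivAt_scherkA_u u v).div (hasDerivAt_scherkB_u u v) hB).log
    (div_ne_zero hA hB)).const_mul (1 / 2)
  simp only [scherk_eq]
  refine (h₁.prodMk (h₂.prodMk h₃)).congr_deriv ?_
  simp only [scherkU, scherkA, scherkB] at hA hB ⊢
  refine Prod.ext ?_ (Prod.ext ?_ ?_) <;> dsimp <;> field_simp <;> ring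

theorem hasDerivAt_scherk_v (h : u ^ 2 + v ^ 2 ≠ 1) :
    HasDerivAt (fun y => scherk (u, y)) (scherkV (u, v)) v := by
  have hr : u ^ 2 + v ^ 2 - 1 ≠ 0 := sub_ne_zero.mpr h
  have hA := (scherkA_pos h).ne'
  have hB := (scherkB_pos h).ne'
  have hden : HasDerivAt (fun y => u ^ 2 + y ^ 2 - 1) (2 * v) v := by
    simpa using ((hasDerivAt_pow 2 v).const_add (u ^ 2)).sub_const 1
  have h₁ := ((hasDerivAt_const v (2 * u)).div hden hr).arctan
  have h₂ := (((hasDerivAt_id v).const_mul (-2)).div hden hr).arctan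
  have h₃ := (((hasDerivAt_scherkA_v u v).div (hasDerivAt_scherkB_v u v) hB).log
    (div_ne_zero hA hB)).const_mul (1 / 2)
  simp only [scherk_eq]
  refine (h₁.prodMk (h₂.prodMk h₃)).congr_deriv ?_
  simp only [scherkV, scherkA, scherkB] at hA hB ⊢
  refine Prod.ext ?_ (Prod.ext ?_ ?_) <;> dsimp <;> field_simp <;> ring

theorem pdU_scherkU_add_pdV_scherkV (h : u ^ 2 + v ^ 2 ≠ 1) :
    pdU scherkU (u, v) + pdV scherkV (u, v) = 0 := by
  have hA := (scherkA_pos h).ne'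
  have hB := (scherkB_pos h).ne'
  have hAu := hasDerivAt_scherkA_u u v
  have hBu := hasDerivAt_scherkB_u u v
  have hAv := hasDerivAt_scherkA_v u v
  have hBv := hasDerivAt_scherkB_v u v
  have hU : HasDerivAt (fun x => scherkU (x, v)) _ u :=
    (((((hasDerivAt_pow 2 u).const_sub (v ^ 2)).sub_const 1).const_mul 2).div hAu hA).prodMk
      (((((hasDerivAt_id u).const_mul 4).mul_const v).div hBu hB).prodMk
      (((((hasDerivAt_id u).const_mul 2).mul
          (((hasDerivAt_pow 2 u).add_const (v ^ 2)).add_const 1)).div hAu hA).sub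
        ((((hasDerivAt_id u).const_mul 2).mul
          (((hasDerivAt_pow 2 u).add_const (v ^ 2)).sub_const 1)).div hBu hB)))
  have hV : HasDerivAt (fun y => scherkV (u, y)) _ v :=
    (((((hasDerivAt_id v).const_mul (4 * u)).neg).div hAv hA)).prodMk
      ((((((hasDerivAt_pow 2 v).sub_const (u ^ 2)).add_const 1).const_mul 2).div hBv hB).prodMk
      (((((hasDerivAt_id v).const_mul 2).mul
          (((hasDerivAt_pow 2 v).const_add (u ^ 2)).sub_const 1)).div hAv hA).sub
        ((((hasDerivAt_id v).const_mul 2).mul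
          (((hasDerivAt_pow 2 v).const_add (u ^ 2)).add_const 1)).div hBv hB)))
  rw [pdU, pdV, hU.deriv, hV.deriv]
  simp only [scherkA, scherkB] at hA hB ⊢
  refine Prod.ext ?_ (Prod.ext ?_ ?_) <;> dsimp <;> field_simp <;> ring

theorem dot3_scherkU_scherkV (h : u ^ 2 + v ^ 2 ≠ 1) :
    dot3 (scherkU (u, v)) (scherkV (u, v)) = 0 := by
  have hA := (scherkA_pos h).ne'
  have hB := (scherkB_pos h).ne'
  simp only [dot3, scherkU, scherkV, scherkA, scherkB] at hA hB ⊢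
  field_simp
  ring

theorem dot3_scherkU_self (h : u ^ 2 + v ^ 2 ≠ 1) :
    dot3 (scherkU (u, v)) (scherkU (u, v)) = dot3 (scherkV (u, v)) (scherkV (u, v)) := by
  have hA := (scherkA_pos h).ne'
  have hB := (scherkB_pos h).ne'
  simp only [dot3, scherkU, scherkV, scherkA, scherkB] at hA hB ⊢
  field_simp
  ring

end

theorem isOpen_setOf_sq_add_sq_ne_one : IsOpen {p : ℝ × ℝ | p.1 ^ 2 + p.2 ^ 2 ≠ 1} :=
  isOpen_ne_fun (by fun_prop) continuous_const

theorem σu_eqOn : Set.EqOn σu scherkU {p | p.1 ^ 2 + p.2 ^ 2 ≠ 1} :=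
  fun _ hp => (hasDerivAt_scherk_u hp).deriv

theorem σv_eqOn : Set.EqOn σv scherkV {p | p.1 ^ 2 + p.2 ^ 2 ≠ 1} :=
  fun _ hp => (hasDerivAt_scherk_v hp).deriv

theorem scherk_harmonic {p : ℝ × ℝ} (h : p.1 ^ 2 + p.2 ^ 2 ≠ 1) : σuu p + σvv p = 0 := by
  rw [σuu, σvv, pdU_congr isOpen_setOf_sq_add_sq_ne_one σu_eqOn h,
    pdV_congr isOpen_setOf_sq_add_sq_ne_one σv_eqOn h]
  exact pdU_scherkU_add_pdV_scherkV h

theorem scherk_conformal {p : ℝ × ℝ} (h : p.1 ^ 2 + p.2 ^ 2 ≠ 1) :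
    g12 p = 0 ∧ g11 p = g22 p := by
  rw [g12, g11, g22, σu_eqOn h, σv_eqOn h]
  exact ⟨dot3_scherkU_scherkV h, dot3_scherkU_self h⟩

/-- the fundamental Scherk surface is minimal: the parametrization is
harmonic, `σ_uu + σ_vv = 0`, and its mean curvature vanishes,
`g₂₂h₁₁ − 2g₁₂h₁₂ + g₁₁h₂₂ = 0`, on `Ω₀` away from the unit circle. -/
theorem scherk_minimal :
    ∀ p ∈ Ω₀, p.1 ^ 2 + p.2 ^ 2 ≠ 1 →
      σuu p + σvv p = 0 ∧
      g22 p * h11 p - 2 * g12 p * h12 p + g11 p * h22 p = 0 := by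
  intro p _ h
  obtain ⟨hg12, hg⟩ := scherk_conformal h
  exact ⟨scherk_harmonic h,
    meanCurvature_numerator_eq_zero_of_conformal_of_harmonic hg12 hg (scherk_harmonic h)⟩
end
end
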